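/- arXiv:1404.2211 — 8 statements merged into one kernel-verified Lean document; each statement's English description precedes it below -/
import Mathlib

section
/- Let F be a field of characteristic 2 and L/F an extension of degree 4 with a² ∈ F for all a ∈ L. Every element g of the L-algebra L ⊗_F L satisfies g² = π(g)² · (1 ⊗ 1), where π : L ⊗_F L → L is the multiplication map. In particular L ⊗_F L is a quadratic L-algebra. -/
open TensorProduct

theorem stmt3 (F L : Type*) [Field F] [Field L] [Algebra F L] [CharP F 2]
    (hdim : Module.finrank F L = 4)
    (hsq : ∀ a : L, ∃ f : F, algebraMap F L f = a ^ 2) (π : (L ⊗[F] L) →ₐ[L] L) (hπ : ∀ x y : L, π (x ⊗ₜ[F] y) = x * y) :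
    ∀ g : L ⊗[F] L, g ^ 2 = algebraMap L (L ⊗[F] L) (π g ^ 2) := by
  haveI : CharP L 2 := charP_of_injective_algebraMap (algebraMap F L).injective 2
  have hinj : Function.Injective (algebraMap L (L ⊗[F] L)) := by
    intro a b hab
    have := congrArg π hab
    simpa [hπ] using this
  haveI : CharP (L ⊗[F] L) 2 := charP_of_injective_algebraMap hinj 2
  intro g
  induction g using TensorProduct.induction_on with
  | zero => simp
  | tmul x y =>
      obtain ⟨f, hf⟩ := hsq y
      rw [hπ]
      have h1 : (x ⊗ₜ[F] y) ^ 2 = (x ^ 2) ⊗ₜ[F] (y ^ 2) := by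
        rw [pow_two, pow_two, pow_two, Algebra.TensorProduct.tmul_mul_tmul]
      rw [h1, ← hf, Algebra.algebraMap_eq_smul_one (A := L), TensorProduct.tmul_smul,
        TensorProduct.smul_tmul', Algebra.TensorProduct.algebraMap_apply, mul_pow, ← hf,
        Algebra.smul_def, mul_comm, Algebra.algebraMap_self_apply]
  | add g1 g2 ih1 ih2 =>
      rw [CharTwo.add_sq, map_add, CharTwo.add_sq, map_add, ih1, ih2]
end

section
/- Let F be a field of characteristic 2 and L/F an extension of degree 4 with a² ∈ F for all a ∈ L. The L-algebra L ⊗_F L is a local ring whose unique maximal ideal is Π = ker π, where π : L ⊗_F L → L is the multiplication map; moreover, an element g ∈ L ⊗_F L is invertible if and only if π(g) ≠ 0, and in that case g⁻¹ = π(g)⁻² · g. -/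
/-! In characteristic 2 with `L^2 ⊆ F`, every element of `L ⊗[F] L` squares to a scalar:
Frobenius is additive, and `(x ⊗ y)^2 = x^2 ⊗ y^2 = x^2 y^2 ⊗ 1` because `y^2 ∈ F` moves across
the tensor sign. Hence `g^2 = π(g)^2`, so `g` is invertible with inverse `π(g)⁻² g` as soon as
`π g ≠ 0`, while `π` kills no unit. The non-units are then exactly `ker π`, an ideal, which makes
the ring local with maximal ideal `ker π`. -/

open TensorProduct

namespace AlgHom

variable {L A : Type*} [Field L] [CommRing A] [Algebra L A] (π : A →ₐ[L] L)
  (hsq : ∀ g : A, g ^ 2 = algebraMap L A (π g ^ 2))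
include hsq

theorem mul_inv_sq_smul_self_eq_one_of_sq_eq_algebraMap {g : A} (hg : π g ≠ 0) :
    g * ((π g ^ 2)⁻¹ • g) = 1 := by
  rw [mul_smul_comm, ← sq, hsq, Algebra.smul_def, ← map_mul, inv_mul_cancel₀ (pow_ne_zero 2 hg),
    map_one]

theorem isUnit_iff_ne_zero_of_sq_eq_algebraMap (g : A) : IsUnit g ↔ π g ≠ 0 :=
  ⟨fun hg => (hg.map π).ne_zero,
    fun hg => .of_mul_eq_one _ (π.mul_inv_sq_smul_self_eq_one_of_sq_eq_algebraMap hsq hg)⟩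

theorem isLocalRing_of_sq_eq_algebraMap : IsLocalRing A :=
  have : Nontrivial A := π.toRingHom.domain_nontrivial
  .of_nonunits_add fun a b ha hb => by
    simp only [mem_nonunits_iff, π.isUnit_iff_ne_zero_of_sq_eq_algebraMap hsq, not_not,
      map_add] at ha hb ⊢
    rw [ha, hb, add_zero]

theorem maximalIdeal_eq_ker_of_sq_eq_algebraMap [IsLocalRing A] :
    IsLocalRing.maximalIdeal A = RingHom.ker π := by
  ext g
  rw [IsLocalRing.mem_maximalIdeal, mem_nonunits_iff, π.isUnit_iff_ne_zero_of_sq_eq_algebraMap hsq,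
    not_not, RingHom.mem_ker]

end AlgHom

namespace Algebra.TensorProduct

variable {F L : Type*} [CommRing F] [CommRing L] [Algebra F L] [CharP L 2]

theorem sq_eq_algebraMap_lmul''_sq (hsq : ∀ a : L, ∃ f : F, algebraMap F L f = a ^ 2)
    (g : L ⊗[F] L) : g ^ 2 = algebraMap L (L ⊗[F] L) (lmul'' F g ^ 2) := by
  induction g using TensorProduct.induction_on with
  | zero => simp
  | tmul x y =>
    obtain ⟨f, hf⟩ := hsq y
    change _ = algebraMap L (L ⊗[F] L) ((x * y) ^ 2)
    rw [sq, tmul_mul_tmul, ← sq, ← sq, mul_pow, ← hf, algebraMap_apply, Algebra.algebraMap_self,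
      RingHom.id_apply, mul_comm, ← Algebra.smul_def, smul_tmul, Algebra.smul_def, mul_one]
  | add a b ha hb =>
    have h2 : (2 : L ⊗[F] L) = 0 := by
      rw [← map_ofNat (algebraMap L (L ⊗[F] L)) 2, CharTwo.two_eq_zero, map_zero]
    rw [add_sq, h2, zero_mul, zero_mul, add_zero, ha, hb, map_add, CharTwo.add_sq, map_add]

end Algebra.TensorProduct

theorem stmt4_general (F L : Type*) [Field F] [Field L] [Algebra F L] [CharP F 2]
    (hsq : ∀ a : L, ∃ f : F, algebraMap F L f = a ^ 2) (π : (L ⊗[F] L) →ₐ[L] L) (hπ : ∀ x y : L, π (x ⊗ₜ[F] y) = x * y) :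
    IsLocalRing (L ⊗[F] L) ∧
    (RingHom.ker π).IsMaximal ∧
    (∀ I : Ideal (L ⊗[F] L), I.IsMaximal → I = RingHom.ker π) ∧
    (∀ g : L ⊗[F] L, IsUnit g ↔ π g ≠ 0) ∧
    (∀ g : L ⊗[F] L, π g ≠ 0 → g * ((π g ^ 2)⁻¹ • g) = 1) := by
  have : CharP L 2 := charP_of_injective_algebraMap (algebraMap F L).injective 2
  obtain rfl : π = Algebra.TensorProduct.lmul'' F := Algebra.TensorProduct.ext' hπ
  have hsq_tensor := Algebra.TensorProduct.sq_eq_algebraMap_lmul''_sq hsq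
  have hlocal := AlgHom.isLocalRing_of_sq_eq_algebraMap _ hsq_tensor
  have hker := AlgHom.maximalIdeal_eq_ker_of_sq_eq_algebraMap _ hsq_tensor
  refine ⟨hlocal, hker ▸ inferInstance, fun I hI => hker ▸ IsLocalRing.eq_maximalIdeal hI,
    AlgHom.isUnit_iff_ne_zero_of_sq_eq_algebraMap _ hsq_tensor,
    fun _ => AlgHom.mul_inv_sq_smul_self_eq_one_of_sq_eq_algebraMap _ hsq_tensor⟩

theorem stmt4 (F L : Type*) [Field F] [Field L] [Algebra F L] [CharP F 2]
    (hdim : Module.finrank F L = 4)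
    (hsq : ∀ a : L, ∃ f : F, algebraMap F L f = a ^ 2) (π : (L ⊗[F] L) →ₐ[L] L) (hπ : ∀ x y : L, π (x ⊗ₜ[F] y) = x * y) :
    IsLocalRing (L ⊗[F] L) ∧
    (RingHom.ker π).IsMaximal ∧
    (∀ I : Ideal (L ⊗[F] L), I.IsMaximal → I = RingHom.ker π) ∧
    (∀ g : L ⊗[F] L, IsUnit g ↔ π g ≠ 0) ∧
    (∀ g : L ⊗[F] L, π g ≠ 0 → g * ((π g ^ 2)⁻¹ • g) = 1) :=
  stmt4_general F L hsq π hπ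
end

section
/- Let F be a field of characteristic 2 and L/F an extension of degree 4 with a² ∈ F for all a ∈ L. Let (1, i, j, k) with k = ij be a basis of L over F, and in L ⊗_F L set p = 1⊗i + i⊗1, q = 1⊗j + j⊗1, r = pq. Then r = 1⊗k + i⊗j + j⊗i + k⊗1, and (1⊗1, p, q, r) is an L-basis of L ⊗_F L. -/
/-!
Since every square of `L` lies in `F`, for `u ∉ F` the plane `F + F u` is a field: `u⁻¹ = u / u²`.
So a relation `i j = a + b i + c j` would give `(i - c)(j - b) = a + b c ∈ F` and hence
`j - b ∈ F (i - c)`, contradicting the independence of `1, i, j`. Thus `1, i, j, i j` is an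
`F`-basis of `L` and `1 ⊗ 1, 1 ⊗ i, 1 ⊗ j, 1 ⊗ i j` spans `L ⊗ L` over `L`. Translating
`x = 1 ⊗ i`, `y = 1 ⊗ j` by the scalars `i ⊗ 1`, `j ⊗ 1` turns `1, x, y, x y` into `1, p, q, r`
without changing the span, and four spanning vectors of a space of dimension four are a basis.
-/

open TensorProduct Submodule

section SquaresInBase

variable {F L : Type*} [Field F] [Field L] [Algebra F L]

lemma exists_smul_eq_of_sq_mem_range_of_mul_mem_range {u v : L} (hu : u ≠ 0)
    (hu2 : u ^ 2 ∈ Set.range (algebraMap F L)) (huv : u * v ∈ Set.range (algebraMap F L)) :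
    ∃ d : F, d • u = v := by
  obtain ⟨s, hs⟩ := hu2
  obtain ⟨t, ht⟩ := huv
  refine ⟨t / s, ?_⟩
  have hs0 : algebraMap F L s ≠ 0 := hs ▸ pow_ne_zero 2 hu
  rw [Algebra.smul_def, map_div₀, ht, hs]
  field_simp

lemma mul_notMem_span_of_sq_mem_range (hsq : ∀ a : L, a ^ 2 ∈ Set.range (algebraMap F L))
    {i j : L}
    (hi : i ∉ span F {1}) (hj : j ∉ span F {1, i}) : i * j ∉ span F {1, i, j} := by
  rw [mem_span_triple]
  rintro ⟨a, b, c, habc⟩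
  have hu : i - c • 1 ≠ 0 := fun h ↦ hi (mem_span_singleton.mpr ⟨c, (sub_eq_zero.mp h).symm⟩)
  have huv : (i - c • 1) * (j - b • 1) ∈ Set.range (algebraMap F L) := by
    refine ⟨a + b * c, ?_⟩
    simp only [Algebra.smul_def, mul_one, map_add, map_mul] at habc ⊢
    linear_combination habc
  obtain ⟨d, hd⟩ := exists_smul_eq_of_sq_mem_range_of_mul_mem_range hu (hsq _) huv
  refine hj (mem_span_pair.mpr ⟨b - d * c, d, ?_⟩)
  rw [eq_sub_iff_add_eq] at hd
  rw [← hd, smul_sub, sub_smul, mul_smul]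
  abel

lemma linearIndependent_one_mul_of_sq_mem_range
    (hsq : ∀ a : L, a ^ 2 ∈ Set.range (algebraMap F L)) {i j : L}
    (hij : LinearIndependent F ![1, i, j]) : LinearIndependent F ![1, i, j, i * j] := by
  have hsnoc : LinearIndependent F (Fin.snoc (Fin.snoc ![1] i) j) := by simpa using hij
  rw [linearIndependent_finSnoc, linearIndependent_finSnoc] at hsnoc
  obtain ⟨⟨-, hi⟩, hj⟩ := hsnoc
  have hv : ![1, i, j, i * j] = Fin.snoc ![1, i, j] (i * j) := by simp
  rw [hv]
  refine hij.finSnoc ?_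
  simp only [Matrix.Fin.snoc_vecCons, Matrix.Fin.snoc_vecEmpty, Matrix.range_cons,
    Matrix.range_empty, Set.union_empty, Set.singleton_union] at hi hj ⊢
  exact mul_notMem_span_of_sq_mem_range hsq hi hj

end SquaresInBase

lemma span_one_tmul_eq_top_of_span_eq_top {R A M : Type*} [CommSemiring R] [Semiring A]
    [Algebra R A] [AddCommMonoid M] [Module R M] {s : Set M} (hs : span R s = ⊤) :
    span A (TensorProduct.mk R A M 1 '' s) = ⊤ := by
  rw [← baseChange_span, hs, baseChange_top]

lemma one_tmul_add_tmul_one_mul {R A : Type*} [CommSemiring R] [Semiring A] [Algebra R A]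
    (a b : A) :
    (1 ⊗ₜ[R] a + a ⊗ₜ[R] 1) * (1 ⊗ₜ[R] b + b ⊗ₜ[R] 1) =
      1 ⊗ₜ[R] (a * b) + a ⊗ₜ[R] b + b ⊗ₜ[R] a + (a * b) ⊗ₜ[R] 1 := by
  simp only [add_mul, mul_add, Algebra.TensorProduct.tmul_mul_tmul, one_mul, mul_one]
  abel

lemma span_le_span_add_algebraMap {A B : Type*} [CommRing A] [CommRing B] [Algebra A B]
    (x y : B) (a b : A) :
    span A {1, x, y, x * y} ≤
      span A {1, x + algebraMap A B a, y + algebraMap A B b,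
        (x + algebraMap A B a) * (y + algebraMap A B b)} := by
  set S := span A {1, x + algebraMap A B a, y + algebraMap A B b,
    (x + algebraMap A B a) * (y + algebraMap A B b)}
  have h1 : (1 : B) ∈ S := subset_span (by simp)
  have hx : x + algebraMap A B a ∈ S := subset_span (by simp)
  have hy : y + algebraMap A B b ∈ S := subset_span (by simp)
  have hxy : (x + algebraMap A B a) * (y + algebraMap A B b) ∈ S := subset_span (by simp)
  have smul_one_mem (c : A) : algebraMap A B c ∈ S := by
    simpa [Algebra.algebraMap_eq_smul_one] using S.smul_mem c h1
  have hx' : x ∈ S := by simpa using S.sub_mem hx (smul_one_mem a)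
  have hy' : y ∈ S := by simpa using S.sub_mem hy (smul_one_mem b)
  -- `x y = (x + a) (y + b) - a y - b x - a b`
  have hxy' : x * y ∈ S := by
    have := S.sub_mem (S.sub_mem (S.sub_mem hxy (S.smul_mem a hy')) (S.smul_mem b hx'))
      (smul_one_mem (a * b))
    convert this using 1
    simp only [Algebra.smul_def, map_mul]
    ring
  rw [span_le]
  simp only [Set.insert_subset_iff, Set.singleton_subset_iff]
  exact ⟨h1, hx', hy', hxy'⟩

theorem stmt8_general (F L : Type*) [Field F] [Field L] [Algebra F L]
    (hdim : Module.finrank F L = 4)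
    (hsq : ∀ a : L, ∃ f : F, algebraMap F L f = a ^ 2) (i j : L) (hij : LinearIndependent F ![1, i, j])
    (p q r : L ⊗[F] L)
    (hp : p = 1 ⊗ₜ[F] i + i ⊗ₜ[F] 1) (hq : q = 1 ⊗ₜ[F] j + j ⊗ₜ[F] 1)
    (hr : r = p * q) :
    r = 1 ⊗ₜ[F] (i * j) + i ⊗ₜ[F] j + j ⊗ₜ[F] i + (i * j) ⊗ₜ[F] 1 ∧
    LinearIndependent L ![(1 : L ⊗[F] L), p, q, r] ∧
    Submodule.span L {(1 : L ⊗[F] L), p, q, r} = ⊤ := by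
  have hspanF : span F {1, i, j, i * j} = ⊤ := by
    have hindep := linearIndependent_one_mul_of_sq_mem_range hsq hij
    simpa only [Matrix.range_cons, Matrix.range_empty, Set.union_empty, Set.singleton_union] using
      hindep.span_eq_top_of_card_eq_finrank (by simp [hdim])
  have hspan : span L {(1 : L ⊗[F] L), p, q, r} = ⊤ := by
    rw [eq_top_iff, ← span_one_tmul_eq_top_of_span_eq_top (A := L) hspanF]
    have h2 := span_le_span_add_algebraMap (A := L) (1 ⊗ₜ[F] i : L ⊗[F] L) (1 ⊗ₜ j) i j
    simpa [Set.image_insert_eq, hp, hq, hr, Algebra.TensorProduct.one_def] using h2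
  refine ⟨by rw [hr, hp, hq, one_tmul_add_tmul_one_mul],
    linearIndependent_of_top_le_span_of_card_eq_finrank ?_ ?_, hspan⟩
  · simp only [Matrix.range_cons, Matrix.range_empty, Set.union_empty, Set.singleton_union,
      hspan, le_refl]
  · simp [hdim]

theorem stmt8 (F L : Type*) [Field F] [Field L] [Algebra F L] [CharP F 2]
    (hdim : Module.finrank F L = 4)
    (hsq : ∀ a : L, ∃ f : F, algebraMap F L f = a ^ 2) (i j : L) (hij : LinearIndependent F ![1, i, j])
    (p q r : L ⊗[F] L)
    (hp : p = 1 ⊗ₜ[F] i + i ⊗ₜ[F] 1) (hq : q = 1 ⊗ₜ[F] j + j ⊗ₜ[F] 1)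
    (hr : r = p * q) :
    r = 1 ⊗ₜ[F] (i * j) + i ⊗ₜ[F] j + j ⊗ₜ[F] i + (i * j) ⊗ₜ[F] 1 ∧
    LinearIndependent L ![(1 : L ⊗[F] L), p, q, r] ∧
    Submodule.span L {(1 : L ⊗[F] L), p, q, r} = ⊤ :=
  stmt8_general F L hdim hsq i j hij p q r hp hq hr
end

section
/- Let F be a field of characteristic 2 and L/F an extension of degree 4 with a² ∈ F for all a ∈ L. The annihilator 𝒜 of the maximal ideal Π = ker π in L ⊗_F L equals Π · Π, the set of products zw with z, w ∈ Π. -/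
/-!
Choose `x, y ∈ L` with `1, x, y` linearly independent over `F`. If `r + s y = 0` with
`r, s ∈ F + F x`, multiplying by `s` gives `s r + s² y = 0` where `s r ∈ F + F x` (as `x² ∈ F`) and
`s² ∈ F`, so `s = 0`; hence `1, x, y, x y` is an `F`-basis of `L`. With `u = x ⊗ 1 - 1 ⊗ x` and
`v = y ⊗ 1 - 1 ⊗ y`, the family `1, u, v, u v` is then an `L`-basis of `L ⊗_F L`, and
`u² = v² = 0` because `x², y² ∈ F` and `char F = 2`. Hence `L ⊗_F L ≅ L[u, v]/(u², v²)` with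
`Π = (u, v, u v)`, and both the annihilator of `Π` and the set of products of two elements of `Π`
are the line `L · u v`.
-/

open TensorProduct

lemma exists_linearIndependent_one_x_y {F L : Type*} [Field F] [Ring L] [Nontrivial L]
    [Algebra F L] (h : 2 < Module.finrank F L) :
    ∃ x y : L, LinearIndependent F ![1, x, y] := by
  obtain ⟨x, hx⟩ := exists_linearIndependent_snoc_of_lt_finrank
    (linearIndependent_unique_iff.2 one_ne_zero : LinearIndependent F ![(1 : L)]) (by omega)
  obtain ⟨y, hy⟩ := exists_linearIndependent_snoc_of_lt_finrank hx h
  exact ⟨x, y, by simpa using hy⟩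

lemma mul_mem_span_one_of_sq {F L : Type*} [CommRing F] [CommRing L] [Algebra F L] {x : L}
    {f : F} (hx : algebraMap F L f = x ^ 2) {s r : L}
    (hs : s ∈ Submodule.span F {1, x}) (hr : r ∈ Submodule.span F {1, x}) :
    s * r ∈ Submodule.span F {1, x} := by
  obtain ⟨a, b, rfl⟩ := Submodule.mem_span_pair.1 hs
  obtain ⟨c, d, rfl⟩ := Submodule.mem_span_pair.1 hr
  refine Submodule.mem_span_pair.2 ⟨a * c + b * d * f, a * d + b * c, ?_⟩
  simp only [Algebra.smul_def, map_add, map_mul, hx]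
  ring

lemma linearIndependent_one_x_y_mul {F L : Type*} [Field F] [Field L] [Algebra F L]
    (hsq : ∀ a : L, ∃ f : F, algebraMap F L f = a ^ 2)
    {x y : L} (hxy : LinearIndependent F ![1, x, y]) :
    LinearIndependent F ![1, x, y, x * y] := by
  have hxy' : ∀ a b c : F, a • 1 + b • x + c • y = 0 → a = 0 ∧ b = 0 ∧ c = 0 := by
    intro a b c h
    have := Fintype.linearIndependent_iff.1 hxy ![a, b, c]
      (by simpa [Fin.sum_univ_three] using h)
    exact ⟨this 0, this 1, this 2⟩
  rw [Fintype.linearIndependent_iff]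
  intro g hg
  simp only [Fin.sum_univ_four, Matrix.cons_val] at hg
  set r := g 0 • (1 : L) + g 1 • x
  set s := g 2 • (1 : L) + g 3 • x
  have hrs : r + s * y = 0 := by
    rw [← hg]
    simp only [r, s, add_mul, smul_mul_assoc, one_mul]
    abel
  obtain ⟨f, hf⟩ := hsq s
  obtain ⟨fx, hfx⟩ := hsq x
  obtain ⟨p, q, hpq⟩ := Submodule.mem_span_pair.1 <| mul_mem_span_one_of_sq hfx
    (Submodule.mem_span_pair.2 ⟨_, _, rfl⟩ : s ∈ _) (Submodule.mem_span_pair.2 ⟨_, _, rfl⟩ : r ∈ _)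
  have hs : s = 0 := by
    have hf0 := (hxy' p q f (by rw [hpq, Algebra.smul_def f y, hf]; linear_combination s * hrs)).2.2
    exact pow_eq_zero_iff two_ne_zero |>.1 (by simpa [hf0] using hf.symm)
  obtain ⟨h2, h3, -⟩ := hxy' (g 2) (g 3) 0 (by simpa using hs)
  obtain ⟨h0, h1, -⟩ := hxy' (g 0) (g 1) 0 (by simpa [hs] using hrs)
  intro i
  fin_cases i <;> assumption

lemma mul_self_tmul_one_sub_one_tmul {F L : Type*} [CommRing F] [CharP F 2] [CommRing L]
    [Algebra F L] {a : L} {f : F} (ha : algebraMap F L f = a ^ 2) :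
    (a ⊗ₜ[F] 1 - 1 ⊗ₜ[F] a) * (a ⊗ₜ[F] 1 - 1 ⊗ₜ[F] a) = 0 := by
  have h2 : (2 : L ⊗[F] L) = 0 := by
    rw [← map_ofNat (algebraMap F (L ⊗[F] L)) 2, CharTwo.two_eq_zero, map_zero]
  have hsq : (a ⊗ₜ[F] (1 : L)) ^ 2 = (1 ⊗ₜ[F] a) ^ 2 := by
    rw [Algebra.TensorProduct.tmul_pow, Algebra.TensorProduct.tmul_pow, one_pow, ← ha,
      Algebra.algebraMap_eq_smul_one, TensorProduct.smul_tmul]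
  linear_combination ((1 ⊗ₜ[F] a) ^ 2 - a ⊗ₜ[F] (1 : L) * 1 ⊗ₜ[F] a) * h2 + hsq

lemma linearIndependent_tmul_one_sub_one_tmul {F L : Type*} [Field F] [Field L] [Algebra F L]
    {x y : L} (B : Module.Basis (Fin 4) F L) (hB : ⇑B = ![1, x, y, x * y]) :
    LinearIndependent L ![1, x ⊗ₜ[F] 1 - 1 ⊗ₜ[F] x, y ⊗ₜ[F] 1 - 1 ⊗ₜ[F] y,
      (x ⊗ₜ[F] 1 - 1 ⊗ₜ[F] x) * (y ⊗ₜ[F] 1 - 1 ⊗ₜ[F] y)] := by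
  let e := Algebra.TensorProduct.basis L B
  have he : ∀ i, e i = 1 ⊗ₜ[F] ![1, x, y, x * y] i := hB ▸ Algebra.TensorProduct.basis_apply B
  have h1 : (1 : L ⊗[F] L) = e 0 := by simp [he, Algebra.TensorProduct.one_def]
  have hu : x ⊗ₜ[F] 1 - 1 ⊗ₜ[F] x = x • e 0 - e 1 := by simp [he, TensorProduct.smul_tmul']
  have hv : y ⊗ₜ[F] 1 - 1 ⊗ₜ[F] y = y • e 0 - e 2 := by simp [he, TensorProduct.smul_tmul']
  have huv : (x ⊗ₜ[F] 1 - 1 ⊗ₜ[F] x) * (y ⊗ₜ[F] 1 - 1 ⊗ₜ[F] y) =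
      (x * y) • e 0 - y • e 1 - x • e 2 + e 3 := by
    simp [he, TensorProduct.smul_tmul', sub_mul, mul_sub]
    abel
  rw [Fintype.linearIndependent_iff]
  intro g hg
  simp only [Fin.sum_univ_four, Matrix.cons_val] at hg
  rw [huv, hu, hv, h1] at hg
  have hc := Fintype.linearIndependent_iff.1 e.linearIndependent
    ![g 0 + g 1 * x + g 2 * y + g 3 * (x * y), -(g 1 + g 3 * y), -(g 2 + g 3 * x), g 3]
    (by rw [Fin.sum_univ_four]; simp only [Matrix.cons_val]; linear_combination (norm := module) hg)
  have h3 : g 3 = 0 := hc 3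
  have h2 : g 2 = 0 := by simpa [h3] using hc 2
  have h1 : g 1 = 0 := by simpa [h3] using hc 1
  have h0 : g 0 = 0 := by simpa [h1, h2, h3] using hc 0
  intro i
  fin_cases i <;> assumption

section SquareZero

variable {L A : Type*} [CommRing L] [CommRing A] [Algebra L A] {u v : A}
  (e : Module.Basis (Fin 4) L A)

lemma exists_eq_smul_one_add (he : ⇑e = ![1, u, v, u * v]) (g : A) :
    ∃ a b c d : L, g = a • 1 + b • u + c • v + d • (u * v) :=
  ⟨e.repr g 0, e.repr g 1, e.repr g 2, e.repr g 3, by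
    simpa [Fin.sum_univ_four, he, add_assoc] using (e.sum_repr g).symm⟩

lemma eq_zero_of_smul_one_add_eq_zero (he : ⇑e = ![1, u, v, u * v]) {a b c d : L}
    (h : a • 1 + b • u + c • v + d • (u * v) = 0) :
    a = 0 ∧ b = 0 ∧ c = 0 ∧ d = 0 := by
  have := Fintype.linearIndependent_iff.1 (he ▸ e.linearIndependent) ![a, b, c, d]
    (by simpa [Fin.sum_univ_four, add_assoc] using h)
  exact ⟨this 0, this 1, this 2, this 3⟩

lemma smul_add_mul_smul_add (huu : u * u = 0) (hvv : v * v = 0) (b c d b' c' d' : L) :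
    (b • u + c • v + d • (u * v)) * (b' • u + c' • v + d' • (u * v)) =
      (b * c' + c * b') • (u * v) := by
  simp only [Algebra.smul_def, map_add, map_mul]
  linear_combination (algebraMap L A b * algebraMap L A b' +
      (algebraMap L A b * algebraMap L A d' + algebraMap L A d * algebraMap L A b') * v +
      algebraMap L A d * algebraMap L A d' * (v * v)) * huu +
    (algebraMap L A c * algebraMap L A c' +
      (algebraMap L A c * algebraMap L A d' + algebraMap L A d * algebraMap L A c') * u) * hvv

lemma exists_eq_smul_mul_of_mul_eq_zero (he : ⇑e = ![1, u, v, u * v]) (huu : u * u = 0)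
    (hvv : v * v = 0) {g : A} (hgu : g * u = 0) (hgv : g * v = 0) : ∃ d : L, g = d • (u * v) := by
  obtain ⟨a, b, c, d, rfl⟩ := exists_eq_smul_one_add e he g
  have hgu' : (0 : L) • 1 + a • u + (0 : L) • v + c • (u * v) = 0 := by
    rw [← hgu]
    simp only [Algebra.smul_def, map_zero]
    linear_combination -(algebraMap L A b + algebraMap L A d * v) * huu
  have hgv' : (0 : L) • 1 + (0 : L) • u + a • v + b • (u * v) = 0 := by
    rw [← hgv]
    simp only [Algebra.smul_def, map_zero]
    linear_combination -(algebraMap L A c + algebraMap L A d * u) * hvv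
  obtain ⟨-, ha, -, hc⟩ := eq_zero_of_smul_one_add_eq_zero e he hgu'
  obtain ⟨-, -, -, hb⟩ := eq_zero_of_smul_one_add_eq_zero e he hgv'
  exact ⟨d, by simp [ha, hb, hc]⟩

lemma exists_eq_of_map_eq_zero (he : ⇑e = ![1, u, v, u * v]) {π : A →ₐ[L] L}
    (hπu : π u = 0) (hπv : π v = 0) {z : A} (hz : π z = 0) :
    ∃ b c d : L, z = b • u + c • v + d • (u * v) := by
  obtain ⟨a, b, c, d, rfl⟩ := exists_eq_smul_one_add e he z
  have ha : a = 0 := by simpa [hπu, hπv] using hz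
  exact ⟨b, c, d, by simp [ha]⟩

theorem setOf_annihilator_ker_eq_setOf_mul (he : ⇑e = ![1, u, v, u * v]) (huu : u * u = 0)
    (hvv : v * v = 0) (π : A →ₐ[L] L) (hπu : π u = 0) (hπv : π v = 0) :
    {g : A | ∀ z : A, π z = 0 → g * z = 0} =
      {g : A | ∃ z w : A, π z = 0 ∧ π w = 0 ∧ g = z * w} := by
  ext g
  constructor
  · intro hg
    obtain ⟨d, rfl⟩ := exists_eq_smul_mul_of_mul_eq_zero e he huu hvv (hg u hπu) (hg v hπv)
    exact ⟨u, d • v, hπu, by simp [hπv], (mul_smul_comm d u v).symm⟩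
  · rintro ⟨z, w, hz, hw, rfl⟩ t ht
    obtain ⟨b, c, d, rfl⟩ := exists_eq_of_map_eq_zero e he hπu hπv hz
    obtain ⟨b', c', d', rfl⟩ := exists_eq_of_map_eq_zero e he hπu hπv hw
    obtain ⟨b'', c'', d'', rfl⟩ := exists_eq_of_map_eq_zero e he hπu hπv ht
    have hzw : (b * c' + c * b') • (u * v) =
        (0 : L) • u + (0 : L) • v + (b * c' + c * b') • (u * v) := by
      simp
    rw [smul_add_mul_smul_add huu hvv, hzw, smul_add_mul_smul_add huu hvv]
    simp

end SquareZero

theorem stmt10 (F L : Type*) [Field F] [Field L] [Algebra F L] [CharP F 2]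
    (hdim : Module.finrank F L = 4)
    (hsq : ∀ a : L, ∃ f : F, algebraMap F L f = a ^ 2) (π : (L ⊗[F] L) →ₐ[L] L) (hπ : ∀ x y : L, π (x ⊗ₜ[F] y) = x * y) :
    {g : L ⊗[F] L | ∀ z : L ⊗[F] L, π z = 0 → g * z = 0} =
      {g : L ⊗[F] L | ∃ z w : L ⊗[F] L, π z = 0 ∧ π w = 0 ∧ g = z * w} := by
  obtain ⟨x, y, hxy⟩ := exists_linearIndependent_one_x_y (F := F) (L := L) (by omega)
  obtain ⟨fx, hfx⟩ := hsq x
  obtain ⟨fy, hfy⟩ := hsq y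
  have hπ_sub : ∀ a : L, π (a ⊗ₜ[F] 1 - 1 ⊗ₜ[F] a) = 0 := fun a => by
    rw [map_sub, hπ, hπ, mul_one, one_mul, sub_self]
  let B := basisOfLinearIndependentOfCardEqFinrank (linearIndependent_one_x_y_mul hsq hxy)
    (by rw [hdim, Fintype.card_fin])
  let e := basisOfLinearIndependentOfCardEqFinrank
    (linearIndependent_tmul_one_sub_one_tmul B (coe_basisOfLinearIndependentOfCardEqFinrank _ _))
    (by rw [Module.finrank_baseChange, hdim, Fintype.card_fin])
  exact setOf_annihilator_ker_eq_setOf_mul e (coe_basisOfLinearIndependentOfCardEqFinrank _ _)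
    (mul_self_tmul_one_sub_one_tmul hfx) (mul_self_tmul_one_sub_one_tmul hfy) π
    (hπ_sub x) (hπ_sub y)
end

section
/- Let F be a field of characteristic 2 and L/F an extension of degree 4 with a² ∈ F for all a ∈ L. Let a, b ∈ L be linearly independent over F. Then a⊗b + b⊗a is a nonzero element of Π = ker π, and it lies in the L-span of {1⊗a, 1⊗b} inside L ⊗_F L. (Geometrically: the extension of the line Fa ⊕ Fb meets the absolute plane at the point L(a⊗b + b⊗a).) -/
open TensorProduct

/-- `a ⊗ b` and `b ⊗ a` are two distinct members of the linearly independent family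
`(v i ⊗ v j)`, where `v = ![a, b]`. -/
theorem LinearIndependent.tmul_add_tmul_comm_ne_zero {R M : Type*} [CommRing R] [IsDomain R]
    [AddCommGroup M] [Module R M] [Module.IsTorsionFree R M] {a b : M}
    (hab : LinearIndependent R ![a, b]) : a ⊗ₜ[R] b + b ⊗ₜ[R] a ≠ 0 := by
  have hpair : LinearIndependent R ![a ⊗ₜ[R] b, b ⊗ₜ[R] a] := by
    have := (hab.tmul_of_isDomain hab).comp ![((0 : Fin 2), (1 : Fin 2)), (1, 0)]
      (by decide)
    convert this using 1
    ext i; fin_cases i <;> rfl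
  intro h
  simpa using (LinearIndependent.pair_iff.mp hpair 1 1 (by simpa using h)).1

theorem tmul_add_tmul_mem_span_one_tmul {R A M : Type*} [CommSemiring R] [CommSemiring A]
    [Algebra R A] [AddCommMonoid M] [Module R M] (x y : A) (m n : M) :
    x ⊗ₜ[R] m + y ⊗ₜ[R] n ∈ Submodule.span A {1 ⊗ₜ[R] n, 1 ⊗ₜ[R] m} := by
  have hx : x ⊗ₜ[R] m = x • ((1 : A) ⊗ₜ[R] m) := by rw [smul_tmul', smul_eq_mul, mul_one]
  have hy : y ⊗ₜ[R] n = y • ((1 : A) ⊗ₜ[R] n) := by rw [smul_tmul', smul_eq_mul, mul_one]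
  rw [hx, hy]
  exact add_mem (Submodule.smul_mem _ _ (Submodule.subset_span (Or.inr rfl)))
    (Submodule.smul_mem _ _ (Submodule.subset_span (Or.inl rfl)))

theorem stmt12_general (F L : Type*) [Field F] [Field L] [Algebra F L] [CharP F 2]
    (π : (L ⊗[F] L) →ₐ[L] L) (hπ : ∀ x y : L, π (x ⊗ₜ[F] y) = x * y) (a b : L) (hab : LinearIndependent F ![a, b]) :
    a ⊗ₜ[F] b + b ⊗ₜ[F] a ≠ 0 ∧
    π (a ⊗ₜ[F] b + b ⊗ₜ[F] a) = 0 ∧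
    a ⊗ₜ[F] b + b ⊗ₜ[F] a ∈ Submodule.span L {1 ⊗ₜ[F] a, 1 ⊗ₜ[F] b} := by
  have : CharP L 2 := charP_of_injective_algebraMap (algebraMap F L).injective 2
  refine ⟨hab.tmul_add_tmul_comm_ne_zero, ?_, tmul_add_tmul_mem_span_one_tmul a b b a⟩
  rw [map_add, hπ, hπ, mul_comm b a, CharTwo.add_self_eq_zero]

theorem stmt12 (F L : Type*) [Field F] [Field L] [Algebra F L] [CharP F 2]
    (hdim : Module.finrank F L = 4)
    (hsq : ∀ a : L, ∃ f : F, algebraMap F L f = a ^ 2) (π : (L ⊗[F] L) →ₐ[L] L) (hπ : ∀ x y : L, π (x ⊗ₜ[F] y) = x * y) (a b : L) (hab : LinearIndependent F ![a, b]) :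
    a ⊗ₜ[F] b + b ⊗ₜ[F] a ≠ 0 ∧
    π (a ⊗ₜ[F] b + b ⊗ₜ[F] a) = 0 ∧
    a ⊗ₜ[F] b + b ⊗ₜ[F] a ∈ Submodule.span L {1 ⊗ₜ[F] a, 1 ⊗ₜ[F] b} :=
  stmt12_general F L π hπ a b hab
end

section
/- Let F be a field of characteristic 2 and L/F an extension of degree 4 with a² ∈ F for all a ∈ L. For every 2-dimensional F-subspace M of L and every a ∈ L \ {0}, there is a unique 2-dimensional F-subspace N with a ∈ N and N Clifford parallel to M (i.e., N = Mb for some b ≠ 0). That is, Clifford parallelism is a parallelism: each parallel class is a spread of lines. -/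
open TensorProduct

theorem stmt14 (F L : Type*) [Field F] [Field L] [Algebra F L] [CharP F 2]
    (hdim : Module.finrank F L = 4)
    (hsq : ∀ a : L, ∃ f : F, algebraMap F L f = a ^ 2) :
    ∀ M : Submodule F L, Module.finrank F M = 2 → ∀ a : L, a ≠ 0 →
      ∃! N : Submodule F L, Module.finrank F N = 2 ∧ a ∈ N ∧
        ∃ b : L, b ≠ 0 ∧ N = M.map (LinearMap.mulRight F b) := by
  have hFL : FiniteDimensional F L := Module.finite_of_finrank_eq_succ hdim
  intro M hM a ha
  -- basis of M
  haveI : Module.Finite F M := inferInstance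
  let bb := Module.finBasisOfFinrankEq F M hM
  set u : L := (bb 0 : L) with hu
  set v : L := (bb 1 : L) with hv
  have huM : u ∈ M := (bb 0).2
  have hvM : v ∈ M := (bb 1).2
  have hspan : M ≤ Submodule.span F ({u, v} : Set L) := by
    intro x hx
    have hrep : (⟨x, hx⟩ : M) = bb.repr ⟨x, hx⟩ 0 • bb 0 + bb.repr ⟨x, hx⟩ 1 • bb 1 := by
      conv_lhs => rw [← bb.sum_repr ⟨x, hx⟩]
      rw [Fin.sum_univ_two]
    have hx2 : x = bb.repr ⟨x, hx⟩ 0 • u + bb.repr ⟨x, hx⟩ 1 • v := by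
      have := congrArg (Subtype.val) hrep
      simpa using this
    rw [hx2]
    exact Submodule.add_mem _
      (Submodule.smul_mem _ _ (Submodule.subset_span (Set.mem_insert _ _)))
      (Submodule.smul_mem _ _ (Submodule.subset_span (Set.mem_insert_of_mem _ rfl)))
  -- squares helper
  have hST : ∀ w t : L, t ∈ M → w * w * t ∈ M := by
    intro w t ht
    obtain ⟨f, hf⟩ := hsq w
    have : w * w * t = f • t := by
      rw [Algebra.smul_def, hf]; ring
    rw [this]; exact Submodule.smul_mem _ _ ht
  -- triple products stay in M
  have key : ∀ x ∈ M, ∀ y ∈ M, ∀ z ∈ M, x * y * z ∈ M := by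
    have h3 : Submodule.span F ({u, v} : Set L) * Submodule.span F ({u, v} : Set L) *
        Submodule.span F ({u, v} : Set L) ≤ M := by
      rw [Submodule.span_mul_span, Submodule.span_mul_span]
      apply Submodule.span_le.2
      rintro w hw
      obtain ⟨pq, hpq, r, hr, rfl⟩ := hw
      obtain ⟨p, hp, q, hq, rfl⟩ := hpq
      have hcase : ∀ s : L, s ∈ ({u, v} : Set L) → s = u ∨ s = v := by
        rintro s (rfl | rfl); exacts [Or.inl rfl, Or.inr rfl]
      rcases hcase p hp with rfl | rfl <;> rcases hcase q hq with rfl | rfl <;>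
        rcases hcase r hr with rfl | rfl <;>
      simp only [SetLike.mem_coe] <;>
      first
        | exact hST u u huM
        | exact hST u v hvM
        | exact hST v u huM
        | exact hST v v hvM
        | (show u * v * u ∈ M
           rw [show u * v * u = u * u * v from by ring]; exact hST u v hvM)
        | (show u * v * v ∈ M
           rw [show u * v * v = v * v * u from by ring]; exact hST v u huM)
        | (show v * u * u ∈ M
           rw [show v * u * u = u * u * v from by ring]; exact hST u v hvM)
        | (show v * u * v ∈ M
           rw [show v * u * v = v * v * u from by ring]; exact hST v u huM)
    intro x hx y hy z hz
    exact h3 (Submodule.mul_mem_mul (Submodule.mul_mem_mul (hspan hx) (hspan hy)) (hspan hz))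
  -- nonzero element of M
  have hMne : M ≠ ⊥ := by
    intro h
    rw [h, finrank_bot] at hM
    exact (by norm_num : (0:ℕ) ≠ 2) hM
  obtain ⟨m, hmM, hm0⟩ := Submodule.exists_mem_ne_zero_of_ne_bot hMne
  -- stability lemma: map by m⁻¹ * m' keeps M inside M
  have stab : ∀ m₁ ∈ M, m₁ ≠ 0 → ∀ m₂ ∈ M,
      M.map (LinearMap.mulRight F (m₁⁻¹ * m₂)) ≤ M := by
    intro m₁ hm₁ hm₁0 m₂ hm₂
    rintro _ ⟨x, hx, rfl⟩
    rw [LinearMap.mulRight_apply]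
    obtain ⟨f, hf⟩ := hsq m₁
    have hf0 : f ≠ 0 := by
      intro h
      apply hm₁0
      have : m₁ ^ 2 = 0 := by rw [← hf, h, map_zero]
      exact pow_eq_zero_iff (by norm_num) |>.mp this
    have heq : x * (m₁⁻¹ * m₂) = f⁻¹ • (x * m₂ * m₁) := by
      rw [Algebra.smul_def, map_inv₀, hf]
      field_simp
    rw [heq]
    exact Submodule.smul_mem _ _ (key x hx m₂ hm₂ m₁ hm₁)
  -- stab gives equality when both nonzero
  have stabEq : ∀ m₁ ∈ M, m₁ ≠ 0 → ∀ m₂ ∈ M, m₂ ≠ 0 →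
      M.map (LinearMap.mulRight F (m₁⁻¹ * m₂)) = M := by
    intro m₁ hm₁ hm₁0 m₂ hm₂ hm₂0
    refine le_antisymm (stab m₁ hm₁ hm₁0 m₂ hm₂) ?_
    intro x hx
    have hx' : x * (m₂⁻¹ * m₁) ∈ M := stab m₂ hm₂ hm₂0 m₁ hm₁ ⟨x, hx, rfl⟩
    refine ⟨x * (m₂⁻¹ * m₁), hx', ?_⟩
    rw [LinearMap.mulRight_apply]
    field_simp
  -- the candidate
  set b : L := m⁻¹ * a with hb
  have hb0 : b ≠ 0 := mul_ne_zero (inv_ne_zero hm0) ha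
  have hinj : ∀ c : L, c ≠ 0 → Function.Injective (LinearMap.mulRight F c) := by
    intro c hc x y hxy
    simp only [LinearMap.mulRight_apply] at hxy
    exact mul_left_injective₀ hc hxy
  have hrank : ∀ c : L, c ≠ 0 → Module.finrank F (M.map (LinearMap.mulRight F c)) = 2 := by
    intro c hc
    rw [← hM]
    exact (Submodule.equivMapOfInjective _ (hinj c hc) M).finrank_eq.symm
  refine ⟨M.map (LinearMap.mulRight F b), ⟨hrank b hb0, ⟨m, hmM, ?_⟩, b, hb0, rfl⟩, ?_⟩
  · rw [LinearMap.mulRight_apply, hb]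
    field_simp
  · rintro N ⟨hN2, haN, b', hb'0, rfl⟩
    obtain ⟨m', hm'M, hm'a⟩ := haN
    rw [LinearMap.mulRight_apply] at hm'a
    have hm'0 : m' ≠ 0 := by
      rintro rfl
      rw [zero_mul] at hm'a
      exact ha hm'a.symm
    have hcb : (m'⁻¹ * m) * b = b' := by
      rw [hb, ← hm'a]
      field_simp
    calc M.map (LinearMap.mulRight F b')
        = M.map (LinearMap.mulRight F ((m'⁻¹ * m) * b)) := by rw [hcb]
      _ = (M.map (LinearMap.mulRight F (m'⁻¹ * m))).map (LinearMap.mulRight F b) := by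
          rw [LinearMap.mulRight_mul, Submodule.map_comp]
      _ = M.map (LinearMap.mulRight F b) := by
          rw [stabEq m' hm'M hm'0 m hmM hm0]
end

section
/- Let F be a field of characteristic 2 and L/F an extension of degree 4 with a² ∈ F for all a ∈ L. Fix i ∈ L \ F and let F[i] = F ⊕ Fi. Then (F[i] ⊗_F L) ∩ Π = { (1 ⊗ y)·p : y ∈ L }, where p = 1⊗i + i⊗1 and Π = ker π is the maximal ideal of L ⊗_F L. -/
open TensorProduct

theorem stmt17 (F L : Type*) [Field F] [Field L] [Algebra F L] [CharP F 2]
    (hdim : Module.finrank F L = 4)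
    (hsq : ∀ a : L, ∃ f : F, algebraMap F L f = a ^ 2) (π : (L ⊗[F] L) →ₐ[L] L) (hπ : ∀ x y : L, π (x ⊗ₜ[F] y) = x * y) (i : L) (hi : i ∉ Set.range (algebraMap F L)) :
    {g : L ⊗[F] L |
        g ∈ Submodule.span F
          {z : L ⊗[F] L | ∃ x ∈ Submodule.span F {(1 : L), i}, ∃ y : L, z = x ⊗ₜ[F] y} ∧
        π g = 0} =
      {g : L ⊗[F] L | ∃ y : L, g = (1 ⊗ₜ[F] y) * (1 ⊗ₜ[F] i + i ⊗ₜ[F] 1)} := by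
  haveI : CharP L 2 := charP_of_injective_algebraMap (algebraMap F L).injective 2
  have hmul : ∀ y : L, (1 ⊗ₜ[F] y) * (1 ⊗ₜ[F] i + i ⊗ₜ[F] 1)
      = 1 ⊗ₜ[F] (i * y) + i ⊗ₜ[F] y := by
    intro y
    rw [mul_add, Algebra.TensorProduct.tmul_mul_tmul,
      Algebra.TensorProduct.tmul_mul_tmul, one_mul, one_mul, mul_one, mul_comm y i]
  ext g
  simp only [Set.mem_setOf_eq]
  constructor
  · rintro ⟨hspan, hpi⟩
    have hS : ∃ u v : L, g = 1 ⊗ₜ[F] u + i ⊗ₜ[F] v := by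
      refine Submodule.span_induction ?_ ?_ ?_ ?_ hspan
      · rintro z ⟨x, hx, y, rfl⟩
        rw [Submodule.mem_span_pair] at hx
        obtain ⟨c, d, rfl⟩ := hx
        refine ⟨c • y, d • y, ?_⟩
        rw [add_tmul, smul_tmul, smul_tmul]
      · exact ⟨0, 0, by rw [tmul_zero, tmul_zero, add_zero]⟩
      · rintro a b - - ⟨u1, v1, rfl⟩ ⟨u2, v2, rfl⟩
        exact ⟨u1 + u2, v1 + v2, by rw [tmul_add, tmul_add]; ring⟩
      · rintro c a - ⟨u, v, rfl⟩
        exact ⟨c • u, c • v, by rw [smul_add, ← tmul_smul, ← tmul_smul]⟩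
    obtain ⟨u, v, rfl⟩ := hS
    have hu : u = i * v := by
      have : u + i * v = 0 := by
        rw [map_add, hπ, hπ, one_mul] at hpi
        exact hpi
      have := eq_neg_of_add_eq_zero_left this
      rwa [CharTwo.neg_eq] at this
    exact ⟨v, by rw [hmul, hu]⟩
  · rintro ⟨y, rfl⟩
    rw [hmul]
    constructor
    · refine Submodule.add_mem _ (Submodule.subset_span ?_) (Submodule.subset_span ?_)
      · exact ⟨1, Submodule.subset_span (Set.mem_insert _ _), i * y, rfl⟩
      · exact ⟨i, Submodule.subset_span (Set.mem_insert_of_mem _ rfl), y, rfl⟩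
    · rw [map_add, hπ, hπ, one_mul, mul_comm]
      exact CharTwo.add_self_eq_zero _
end

section
/- Let F be a field of characteristic 2 and L/F an extension of degree 4 with a² ∈ F for all a ∈ L. Let M be a 2-dimensional F-subspace of L and i ∈ L \ F. Then M is Clifford parallel to F[i] = F ⊕ Fi (i.e., M = F[i]·b for some b ∈ L \ {0}) if and only if there exists b ∈ L \ {0} such that the element 1⊗ib + i⊗b lies in the L-span of {1 ⊗ m : m ∈ M} inside L ⊗_F L. -/
/-!
Base change of the quotient map `V → V ⧸ M` kills the `L`-span of `1 ⊗ M`, and `1 ⊗ x + i ⊗ y`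
maps to zero in `L ⊗ (V ⧸ M)` only if `x, y ∈ M`, because `1` and `i` are `F`-independent.
So the tensor condition says exactly that `b` and `i * b` lie in `M`, i.e. `F[i] b ≤ M`, and
equality follows since both sides are `2`-dimensional.
-/

open TensorProduct

section OneTmulAddTmul

variable {F L V : Type*} [Field F] [Ring L] [Nontrivial L] [Algebra F L]
  [AddCommGroup V] [Module F V] {i : L}

theorem eq_zero_of_one_tmul_add_tmul_eq_zero (hi : i ∉ Set.range (algebraMap F L)) {x y : V}
    (h : (1 : L) ⊗ₜ[F] x + i ⊗ₜ[F] y = 0) : x = 0 ∧ y = 0 := by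
  -- A functional vanishing on `F ∙ 1` but not at `i` isolates `y`.
  have hi' : i ∉ (1 : Submodule F L) := by
    rwa [Submodule.one_eq_range, LinearMap.mem_range]
  obtain ⟨φ, hφi, hφ1⟩ := Submodule.exists_dual_map_eq_bot_of_notMem hi' inferInstance
  have hφ1 : φ 1 = 0 := by
    simpa [hφ1] using Submodule.mem_map_of_mem (f := φ) (Submodule.one_le.mp le_rfl)
  have hy : y = 0 := by
    have := congrArg ((TensorProduct.lid F V).toLinearMap ∘ₗ φ.rTensor V) h
    simpa [hφ1, hφi] using this
  refine ⟨?_, hy⟩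
  rw [hy, tmul_zero, add_zero] at h
  exact Module.Flat.tensorProduct_mk_injective F V L (by simpa using h)

theorem one_tmul_add_tmul_mem_span_iff (hi : i ∉ Set.range (algebraMap F L)) (M : Submodule F V)
    {x y : V} :
    (1 : L) ⊗ₜ[F] x + i ⊗ₜ[F] y ∈ Submodule.span L {z : L ⊗[F] V | ∃ m ∈ M, z = 1 ⊗ₜ[F] m} ↔
      x ∈ M ∧ y ∈ M := by
  constructor
  · intro h
    have hker : Submodule.span L {z : L ⊗[F] V | ∃ m ∈ M, z = 1 ⊗ₜ[F] m} ≤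
        LinearMap.ker (M.mkQ.baseChange L) := by
      rw [Submodule.span_le]
      rintro _ ⟨m, hm, rfl⟩
      simp [(Submodule.Quotient.mk_eq_zero M).2 hm]
    have := hker h
    simp only [LinearMap.mem_ker, map_add, LinearMap.baseChange_tmul] at this
    simpa [Submodule.Quotient.mk_eq_zero] using eq_zero_of_one_tmul_add_tmul_eq_zero hi this
  · rintro ⟨hx, hy⟩
    have hmem : ∀ m ∈ M, (1 : L) ⊗ₜ[F] m ∈
        Submodule.span L {z : L ⊗[F] V | ∃ m ∈ M, z = 1 ⊗ₜ[F] m} :=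
      fun m hm ↦ Submodule.subset_span ⟨m, hm, rfl⟩
    have hiy : i ⊗ₜ[F] y = i • ((1 : L) ⊗ₜ[F] y) := by rw [smul_tmul', smul_eq_mul, mul_one]
    exact add_mem (hmem x hx) (hiy ▸ Submodule.smul_mem _ i (hmem y hy))

end OneTmulAddTmul

section CliffordParallel

variable {F L : Type*} [Field F] [Ring L] [Algebra F L]

theorem map_mulRight_span_one_pair (i b : L) :
    (Submodule.span F {(1 : L), i}).map (LinearMap.mulRight F b) = Submodule.span F {b, i * b} := by
  rw [Submodule.map_span, Set.image_pair]
  simp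

variable [IsDomain L] {i b : L}

theorem linearIndependent_mul_right_pair (hi : i ∉ Set.range (algebraMap F L)) (hb : b ≠ 0) :
    LinearIndependent F ![b, i * b] := by
  rw [LinearIndependent.pair_iff' hb]
  rintro a hab
  exact hi ⟨a, mul_right_cancel₀ hb (by rwa [← Algebra.smul_def])⟩

theorem finrank_span_mul_right_pair (hi : i ∉ Set.range (algebraMap F L)) (hb : b ≠ 0) :
    Module.finrank F (Submodule.span F {b, i * b}) = 2 := by
  rw [← Matrix.range_cons_cons_empty b (i * b) ![], finrank_span_eq_card
    (linearIndependent_mul_right_pair hi hb), Fintype.card_fin]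

end CliffordParallel

theorem stmt18_general (F L : Type*) [Field F] [Field L] [Algebra F L]
    (i : L) (hi : i ∉ Set.range (algebraMap F L))
    (M : Submodule F L) (hM : Module.finrank F M = 2) :
    (∃ b : L, b ≠ 0 ∧
        M = (Submodule.span F {(1 : L), i}).map (LinearMap.mulRight F b)) ↔
    (∃ b : L, b ≠ 0 ∧
        1 ⊗ₜ[F] (i * b) + i ⊗ₜ[F] b ∈
          Submodule.span L {z : L ⊗[F] L | ∃ m ∈ M, z = (1 : L) ⊗ₜ[F] m}) := by
  simp_rw [one_tmul_add_tmul_mem_span_iff hi, map_mulRight_span_one_pair]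
  refine exists_congr fun b ↦ and_congr_right fun hb ↦ ⟨?_, fun ⟨hibM, hbM⟩ ↦ ?_⟩
  · rintro rfl
    exact ⟨Submodule.subset_span (by simp), Submodule.subset_span (by simp)⟩
  · have : FiniteDimensional F M := Module.finite_of_finrank_eq_succ hM
    refine (Submodule.eq_of_le_of_finrank_le ?_ ?_).symm
    · rw [Submodule.span_le, Set.insert_subset_iff, Set.singleton_subset_iff]
      exact ⟨hbM, hibM⟩
    · rw [hM, finrank_span_mul_right_pair hi hb]

theorem stmt18 (F L : Type*) [Field F] [Field L] [Algebra F L] [CharP F 2]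
    (hdim : Module.finrank F L = 4)
    (hsq : ∀ a : L, ∃ f : F, algebraMap F L f = a ^ 2) (i : L) (hi : i ∉ Set.range (algebraMap F L))
    (M : Submodule F L) (hM : Module.finrank F M = 2) :
    (∃ b : L, b ≠ 0 ∧
        M = (Submodule.span F {(1 : L), i}).map (LinearMap.mulRight F b)) ↔
    (∃ b : L, b ≠ 0 ∧
        1 ⊗ₜ[F] (i * b) + i ⊗ₜ[F] b ∈
          Submodule.span L {z : L ⊗[F] L | ∃ m ∈ M, z = (1 : L) ⊗ₜ[F] m}) :=
  stmt18_general F L i hi M hM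
end
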